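/- Uniform interleaver expectation (Lemma 1): Let x, y be binary vectors of length n with Hamming weights d1, d2, and let Π be a uniformly random permutation of the coordinates. Then for any real Y, E_Π[Y^{w(xΠ + y) + w(y)}] = Σ_{k = max(0, d1+d2-n)}^{min(d1,d2)} [C(d2,k)·C(n-d2,d1-k)/C(n,d1)] · Y^{d1 + 2d2 - 2k}. -/

import Mathlib

/-- Hamming weight of a binary vector. -/
def wt {n : ℕ} (x : Fin n → ZMod 2) : ℕ :=
  (Finset.univ.filter (fun i => x i ≠ 0)).card

open Finset Equiv


section Fiber
variable {n : ℕ}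

/-- The permutation built from two partial bijections. -/
def glue (T Sx : Finset (Fin n)) (e1 : {i : Fin n // i ∈ T} ≃ {i : Fin n // i ∈ Sx})
    (e2 : {i : Fin n // ¬ i ∈ T} ≃ {i : Fin n // ¬ i ∈ Sx}) : Equiv.Perm (Fin n) :=
  (Equiv.sumCompl (· ∈ T)).symm.trans ((e1.sumCongr e2).trans (Equiv.sumCompl (· ∈ Sx)))

lemma glue_pos (T Sx : Finset (Fin n)) (e1 : {i : Fin n // i ∈ T} ≃ {i : Fin n // i ∈ Sx})
    (e2 : {i : Fin n // ¬ i ∈ T} ≃ {i : Fin n // ¬ i ∈ Sx}) {i : Fin n} (hi : i ∈ T) :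
    glue T Sx e1 e2 i = ↑(e1 ⟨i, hi⟩) := by
  simp [glue, Equiv.sumCompl_symm_apply_of_pos hi]

lemma glue_neg (T Sx : Finset (Fin n)) (e1 : {i : Fin n // i ∈ T} ≃ {i : Fin n // i ∈ Sx})
    (e2 : {i : Fin n // ¬ i ∈ T} ≃ {i : Fin n // ¬ i ∈ Sx}) {i : Fin n} (hi : ¬ i ∈ T) :
    glue T Sx e1 e2 i = ↑(e2 ⟨i, hi⟩) := by
  simp [glue, Equiv.sumCompl_symm_apply_of_neg hi]

lemma card_fiber_perm (Sx T : Finset (Fin n)) (h : T.card = Sx.card) :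
    Fintype.card {π : Equiv.Perm (Fin n) // ∀ i, π i ∈ Sx ↔ i ∈ T}
      = (T.card).factorial * (n - T.card).factorial := by
  have hb : Function.Bijective
      (fun p : ({i : Fin n // i ∈ T} ≃ {i : Fin n // i ∈ Sx}) ×
          ({i : Fin n // ¬ i ∈ T} ≃ {i : Fin n // ¬ i ∈ Sx}) =>
        (⟨glue T Sx p.1 p.2, by
          intro i
          by_cases hi : i ∈ T
          · rw [glue_pos T Sx p.1 p.2 hi]
            simp [hi, (p.1 ⟨i, hi⟩).2]
          · rw [glue_neg T Sx p.1 p.2 hi]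
            simp [hi, (p.2 ⟨i, hi⟩).2]⟩ :
          {π : Equiv.Perm (Fin n) // ∀ i, π i ∈ Sx ↔ i ∈ T})) := by
    constructor
    · rintro ⟨a1, a2⟩ ⟨b1, b2⟩ hab
      have hπ : glue T Sx a1 a2 = glue T Sx b1 b2 := congrArg Subtype.val hab
      refine Prod.ext ?_ ?_
      · ext i
        have := DFunLike.congr_fun hπ i.1
        rw [glue_pos T Sx a1 a2 i.2, glue_pos T Sx b1 b2 i.2] at this
        exact congrArg Fin.val this
      · ext i
        have := DFunLike.congr_fun hπ i.1
        rw [glue_neg T Sx a1 a2 i.2, glue_neg T Sx b1 b2 i.2] at this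
        exact congrArg Fin.val this
    · rintro ⟨π, hπ⟩
      refine ⟨(π.subtypeEquiv (fun i => (hπ i).symm),
        π.subtypeEquiv (fun i => not_congr (hπ i).symm)), ?_⟩
      refine Subtype.ext ?_
      ext i
      by_cases hi : i ∈ T
      · rw [glue_pos T Sx _ _ hi]; rfl
      · rw [glue_neg T Sx _ _ hi]; rfl
  rw [← Fintype.card_of_bijective hb, Fintype.card_prod]
  have h1 : Fintype.card {i : Fin n // i ∈ T} = T.card := Fintype.card_coe T
  have h2 : Fintype.card {i : Fin n // i ∈ Sx} = T.card := by rw [Fintype.card_coe, h]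
  have h3 : Fintype.card {i : Fin n // ¬ i ∈ T} = n - T.card := by
    simpa using Fintype.card_subtype_compl (fun i : Fin n => i ∈ T)
  have h4 : Fintype.card {i : Fin n // ¬ i ∈ Sx} = n - T.card := by
    rw [h]
    simpa using Fintype.card_subtype_compl (fun i : Fin n => i ∈ Sx)
  rw [Fintype.card_equiv (Fintype.equivOfCardEq (h1.trans h2.symm)),
    Fintype.card_equiv (Fintype.equivOfCardEq (h3.trans h4.symm)), h1, h3]

end Fiber

lemma card_subsets_inter {n : ℕ} (Sy : Finset (Fin n)) {d1 k : ℕ} (hk : k ≤ d1) :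
    ((Finset.univ.powersetCard d1).filter (fun T => (T ∩ Sy).card = k)).card
      = Sy.card.choose k * ((n - Sy.card).choose (d1 - k)) := by
  classical
  have hcompl : (Syᶜ).card = n - Sy.card := by
    simp [Finset.card_compl]
  rw [← hcompl, ← Finset.card_powersetCard (d1 - k) Syᶜ, ← Finset.card_powersetCard k Sy,
    ← Finset.card_product]
  refine Finset.card_bij' (fun T _ => (T ∩ Sy, T \ Sy))
    (fun p _ => p.1 ∪ p.2) ?_ ?_ ?_ ?_
  · intro T hT
    simp only [Finset.mem_filter, Finset.mem_powersetCard] at hT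
    obtain ⟨⟨_, hcard⟩, hkT⟩ := hT
    simp only [Finset.mem_product, Finset.mem_powersetCard]
    refine ⟨⟨Finset.inter_subset_right, hkT⟩, ?_, ?_⟩
    · intro i hi
      simp only [Finset.mem_sdiff] at hi
      simp [Finset.mem_compl, hi.2]
    · have := Finset.card_inter_add_card_sdiff T Sy
      omega
  · intro p hp
    simp only [Finset.mem_product, Finset.mem_powersetCard] at hp
    obtain ⟨⟨hA, hAc⟩, hB, hBc⟩ := hp
    have hdisj : Disjoint p.1 p.2 := by
      refine Finset.disjoint_left.2 fun i hi1 hi2 => ?_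
      exact (Finset.mem_compl.1 (hB hi2)) (hA hi1)
    have hint : (p.1 ∪ p.2) ∩ Sy = p.1 := by
      ext i
      simp only [Finset.mem_inter, Finset.mem_union]
      constructor
      · rintro ⟨h1 | h2, hS⟩
        · exact h1
        · exact absurd hS (Finset.mem_compl.1 (hB h2))
      · intro h; exact ⟨Or.inl h, hA h⟩
    simp only [Finset.mem_filter, Finset.mem_powersetCard]
    refine ⟨⟨Finset.subset_univ _, ?_⟩, by rw [hint, hAc]⟩
    rw [Finset.card_union_of_disjoint hdisj, hAc, hBc]
    omega
  · intro T _
    show T ∩ Sy ∪ T \ Sy = T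
    rw [Finset.union_comm]
    exact Finset.sdiff_union_inter T Sy
  · intro p hp
    simp only [Finset.mem_product, Finset.mem_powersetCard] at hp
    obtain ⟨⟨hA, hAc⟩, hB, hBc⟩ := hp
    have hint : (p.1 ∪ p.2) ∩ Sy = p.1 := by
      ext i
      simp only [Finset.mem_inter, Finset.mem_union]
      constructor
      · rintro ⟨h1 | h2, hS⟩
        · exact h1
        · exact absurd hS (Finset.mem_compl.1 (hB h2))
      · intro h; exact ⟨Or.inl h, hA h⟩
    have hsd : (p.1 ∪ p.2) \ Sy = p.2 := by
      ext i
      simp only [Finset.mem_sdiff, Finset.mem_union]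
      constructor
      · rintro ⟨h1 | h2, hS⟩
        · exact absurd (hA h1) hS
        · exact h2
      · intro h; exact ⟨Or.inr h, Finset.mem_compl.1 (hB h)⟩
    exact Prod.ext hint hsd

lemma card_perm_inter {n : ℕ} (Sx Sy : Finset (Fin n)) {d1 k : ℕ} (hd1 : Sx.card = d1)
    (hk : k ≤ d1) :
    (Finset.univ.filter (fun π : Equiv.Perm (Fin n) =>
        ((Finset.univ.filter (fun i => π i ∈ Sx)) ∩ Sy).card = k)).card
      = Sy.card.choose k * ((n - Sy.card).choose (d1 - k))
          * (Nat.factorial d1 * Nat.factorial (n - d1)) := by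
  classical
  set g : Equiv.Perm (Fin n) → Finset (Fin n) :=
    fun π => Finset.univ.filter (fun i => π i ∈ Sx) with hg
  have hgcard : ∀ π : Equiv.Perm (Fin n), (g π).card = d1 := by
    intro π
    have hmap : g π = Sx.map π.symm.toEmbedding := by
      ext i
      simp [hg, Finset.mem_map, Equiv.symm_apply_eq, eq_comm]
    rw [hmap, Finset.card_map, hd1]
  rw [Finset.card_eq_sum_card_fiberwise (f := g)
    (t := (Finset.univ.powersetCard d1).filter (fun T => (T ∩ Sy).card = k))
    (by
      intro π hπ
      simp only [Finset.mem_coe, Finset.mem_filter, Finset.mem_univ, true_and] at hπ ⊢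
      exact ⟨Finset.mem_powersetCard.2 ⟨Finset.subset_univ _, hgcard π⟩, hπ⟩)]
  have hterm : ∀ T ∈ (Finset.univ.powersetCard d1).filter (fun T => (T ∩ Sy).card = k),
      ((Finset.univ.filter (fun π : Equiv.Perm (Fin n) => (g π ∩ Sy).card = k)).filter
          (fun π => g π = T)).card = Nat.factorial d1 * Nat.factorial (n - d1) := by
    intro T hT
    simp only [Finset.mem_filter, Finset.mem_powersetCard] at hT
    obtain ⟨⟨_, hTcard⟩, hTk⟩ := hT
    rw [Finset.filter_filter]
    have heq : (Finset.univ.filter (fun π : Equiv.Perm (Fin n) =>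
        (g π ∩ Sy).card = k ∧ g π = T))
        = Finset.univ.filter (fun π : Equiv.Perm (Fin n) => ∀ i, π i ∈ Sx ↔ i ∈ T) := by
      apply Finset.filter_congr
      intro π _
      constructor
      · rintro ⟨_, hgT⟩
        intro i
        rw [← hgT]
        simp [hg]
      · intro h
        have hgT : g π = T := by
          ext i
          simp [hg, h i]
        exact ⟨by rw [hgT, hTk], hgT⟩
    rw [heq, ← Fintype.card_subtype,
      card_fiber_perm Sx T (by rw [hTcard, hd1]), hTcard]
  rw [Finset.sum_congr rfl hterm, Finset.sum_const, card_subsets_inter Sy hk, smul_eq_mul]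

/-- Lemma 1: the uniform-interleaver average of `Y^{w(xΠ+y)+w(y)}`. -/
theorem uniform_interleaver_expectation {n d1 d2 : ℕ}
    (x y : Fin n → ZMod 2) (hx : wt x = d1) (hy : wt y = d2) (Y : ℝ) :
    (∑ π : Equiv.Perm (Fin n), Y ^ (wt ((fun i => x (π i)) + y) + wt y))
        / (Nat.factorial n : ℝ)
      = ∑ k ∈ Finset.Icc (d1 + d2 - n) (min d1 d2),
          ((d2.choose k * (n - d2).choose (d1 - k) : ℝ) / (n.choose d1 : ℝ))
            * Y ^ (d1 + 2 * d2 - 2 * k) := by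
  have hd1 : (Finset.univ.filter (fun i => x i ≠ 0)).card = d1 := hx
  have hd2 : (Finset.univ.filter (fun i => y i ≠ 0)).card = d2 := hy
  set Sx : Finset (Fin n) := Finset.univ.filter (fun i => x i ≠ 0) with hSx
  set Sy : Finset (Fin n) := Finset.univ.filter (fun i => y i ≠ 0) with hSy
  have hd1n : d1 ≤ n := by
    rw [← hd1]; simpa using Finset.card_le_univ Sx
  have hA : ∀ π : Equiv.Perm (Fin n),
      (Finset.univ.filter (fun i => π i ∈ Sx)).card = d1 := by
    intro π
    have hmap : Finset.univ.filter (fun i => π i ∈ Sx) = Sx.map π.symm.toEmbedding := by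
      ext i
      simp [Finset.mem_map, Equiv.symm_apply_eq, eq_comm]
    rw [hmap, Finset.card_map, hd1]
  have hfacts : ∀ π : Equiv.Perm (Fin n),
      ((Finset.univ.filter (fun i => π i ∈ Sx)) ∪ Sy).card
        + ((Finset.univ.filter (fun i => π i ∈ Sx)) ∩ Sy).card = d1 + d2 ∧
      ((Finset.univ.filter (fun i => π i ∈ Sx)) ∪ Sy).card ≤ n ∧
      ((Finset.univ.filter (fun i => π i ∈ Sx)) ∩ Sy).card ≤ d1 ∧
      ((Finset.univ.filter (fun i => π i ∈ Sx)) ∩ Sy).card ≤ d2 := by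
    intro π
    refine ⟨by rw [Finset.card_union_add_card_inter, hA π, hd2], ?_, ?_, ?_⟩
    · simpa using Finset.card_le_univ ((Finset.univ.filter (fun i => π i ∈ Sx)) ∪ Sy)
    · rw [← hA π]; exact Finset.card_le_card Finset.inter_subset_left
    · rw [← hd2]; exact Finset.card_le_card Finset.inter_subset_right
  have hexp : ∀ π : Equiv.Perm (Fin n),
      wt ((fun i => x (π i)) + y) + wt y
        = d1 + 2 * d2 - 2 * ((Finset.univ.filter (fun i => π i ∈ Sx)) ∩ Sy).card := by
    intro π
    have hz : ∀ a b : ZMod 2, (a + b ≠ 0) ↔ ((a ≠ 0 ∨ b ≠ 0) ∧ ¬(a ≠ 0 ∧ b ≠ 0)) := by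
      decide
    have hset : Finset.univ.filter (fun i => ((fun i => x (π i)) + y) i ≠ 0)
        = ((Finset.univ.filter (fun i => π i ∈ Sx)) ∪ Sy)
          \ ((Finset.univ.filter (fun i => π i ∈ Sx)) ∩ Sy) := by
      ext i
      simp only [Finset.mem_filter, Finset.mem_univ, true_and, Finset.mem_sdiff,
        Finset.mem_union, Finset.mem_inter, hSx, hSy, Pi.add_apply]
      have := hz (x (π i)) (y i)
      tauto
    have hcard : wt ((fun i => x (π i)) + y)
        = ((Finset.univ.filter (fun i => π i ∈ Sx)) ∪ Sy).card
          - ((Finset.univ.filter (fun i => π i ∈ Sx)) ∩ Sy).card := by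
      rw [wt, hset, Finset.card_sdiff_of_subset (Finset.inter_subset_union)]
    obtain ⟨h1, h2, h3, h4⟩ := hfacts π
    rw [hcard, wt, ← hSy, hd2]
    omega
  have hmaps : ∀ π ∈ (Finset.univ : Finset (Equiv.Perm (Fin n))),
      ((Finset.univ.filter (fun i => π i ∈ Sx)) ∩ Sy).card
        ∈ Finset.Icc (d1 + d2 - n) (min d1 d2) := by
    intro π _
    obtain ⟨h1, h2, h3, h4⟩ := hfacts π
    rw [Finset.mem_Icc]
    omega
  rw [← Finset.sum_fiberwise_of_maps_to hmaps
    (fun π => Y ^ (wt ((fun i => x (π i)) + y) + wt y)), Finset.sum_div]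
  refine Finset.sum_congr rfl ?_
  intro k hk
  rw [Finset.mem_Icc] at hk
  have hkd1 : k ≤ d1 := le_trans hk.2 (min_le_left _ _)
  have hfib : ∀ π ∈ Finset.univ.filter (fun π : Equiv.Perm (Fin n) =>
      ((Finset.univ.filter (fun i => π i ∈ Sx)) ∩ Sy).card = k),
      Y ^ (wt ((fun i => x (π i)) + y) + wt y) = Y ^ (d1 + 2 * d2 - 2 * k) := by
    intro π hπ
    rw [Finset.mem_filter] at hπ
    rw [hexp π, hπ.2]
  rw [Finset.sum_congr rfl hfib, Finset.sum_const,
    card_perm_inter Sx Sy hd1 hkd1, hd2, nsmul_eq_mul]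
  have hn : (n.factorial : ℝ)
      = (n.choose d1 : ℝ) * (d1.factorial : ℝ) * ((n - d1).factorial : ℝ) := by
    exact_mod_cast (Nat.choose_mul_factorial_mul_factorial hd1n).symm
  have hch : (n.choose d1 : ℝ) ≠ 0 :=
    Nat.cast_ne_zero.2 (Nat.choose_pos hd1n).ne'
  have hf1 : (d1.factorial : ℝ) ≠ 0 := Nat.cast_ne_zero.2 (Nat.factorial_ne_zero d1)
  have hf2 : ((n - d1).factorial : ℝ) ≠ 0 := Nat.cast_ne_zero.2 (Nat.factorial_ne_zero _)
  rw [hn]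
  push_cast
  field_simp
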